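/- Let ⟨A, Δ⟩ be a Jordan coalgebra over a field k of characteristic not 2 whose dual algebra A* is unital, and let ⟨L(A), Δ_L⟩ be the Lie coalgebra of Theorem 1. If I is a subcoalgebra of ⟨L(A), Δ_L⟩, then B = A ∩ I is a subcoalgebra of ⟨A, Δ⟩, and I₁*(B) ⊆ I ⊆ I₂*(B). -/

import Mathlib

open TensorProduct

variable {k : Type*} [Field k] {A : Type*} [AddCommGroup A] [Module k A]

/-- The multiplication on the dual space `A*` induced by a comultiplication `Δ`:
`⟨fg, a⟩ = Σ ⟨f, a₍₁₎⟩⟨g, a₍₂₎⟩`. -/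
noncomputable def dmul (Δ : A →ₗ[k] A ⊗[k] A) (f g : (A →ₗ[k] k)) : (A →ₗ[k] k) :=
  (TensorProduct.lid k k).toLinearMap ∘ₗ TensorProduct.map f g ∘ₗ Δ

/-- The left action `f·a = Σ a₍₁₎ ⟨f, a₍₂₎⟩` of the dual algebra on `A`. -/
noncomputable def lact (Δ : A →ₗ[k] A ⊗[k] A) (f : (A →ₗ[k] k)) : A →ₗ[k] A :=
  (TensorProduct.rid k A).toLinearMap ∘ₗ TensorProduct.map LinearMap.id f ∘ₗ Δ

/-- The right action `a·f = Σ ⟨f, a₍₁₎⟩ a₍₂₎` of the dual algebra on `A`. -/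
noncomputable def ract (Δ : A →ₗ[k] A ⊗[k] A) (f : (A →ₗ[k] k)) : A →ₗ[k] A :=
  (TensorProduct.lid k A).toLinearMap ∘ₗ TensorProduct.map f LinearMap.id ∘ₗ Δ

/-- `⟨A, Δ⟩` is a Jordan coalgebra: its dual algebra is commutative and satisfies
the Jordan identity `((ff)g)f = (ff)(gf)`. -/
def IsJordanCoalgebra (Δ : A →ₗ[k] A ⊗[k] A) : Prop :=
  (∀ f g : (A →ₗ[k] k), dmul Δ f g = dmul Δ g f) ∧
  (∀ f g : (A →ₗ[k] k),
    dmul Δ (dmul Δ (dmul Δ f f) g) f = dmul Δ (dmul Δ f f) (dmul Δ g f))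

/-- `B` is a subcoalgebra: `Δ(B) ⊆ B ⊗ B`. -/
def IsSubcoalgebra (Δ : A →ₗ[k] A ⊗[k] A) (B : Submodule k A) : Prop :=
  ∀ b ∈ B, Δ b ∈ LinearMap.range (TensorProduct.map B.subtype B.subtype)

/-- `B` is a coideal: `Δ(B) ⊆ B ⊗ A + A ⊗ B`. -/
def IsCoideal (Δ : A →ₗ[k] A ⊗[k] A) (B : Submodule k A) : Prop :=
  ∀ b ∈ B, Δ b ∈
    LinearMap.range (TensorProduct.map B.subtype (LinearMap.id (R := k) (M := A))) ⊔
    LinearMap.range (TensorProduct.map (LinearMap.id (R := k) (M := A)) B.subtype)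

/-- A derivation of the dual algebra `A*`. -/
def IsDerivation (Δ : A →ₗ[k] A ⊗[k] A)
    (d : (A →ₗ[k] k) →ₗ[k] (A →ₗ[k] k)) : Prop :=
  ∀ f g : (A →ₗ[k] k), d (dmul Δ f g) = dmul Δ (d f) g + dmul Δ f (d g)

theorem dmul_add_left (Δ : A →ₗ[k] A ⊗[k] A) (f₁ f₂ g : (A →ₗ[k] k)) :
    dmul Δ (f₁ + f₂) g = dmul Δ f₁ g + dmul Δ f₂ g := by
  unfold dmul; rw [TensorProduct.map_add_left]; ext a; simp

theorem dmul_add_right (Δ : A →ₗ[k] A ⊗[k] A) (f g₁ g₂ : (A →ₗ[k] k)) :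
    dmul Δ f (g₁ + g₂) = dmul Δ f g₁ + dmul Δ f g₂ := by
  unfold dmul; rw [TensorProduct.map_add_right]; ext a; simp

theorem dmul_smul_left (Δ : A →ₗ[k] A ⊗[k] A) (c : k) (f g : (A →ₗ[k] k)) :
    dmul Δ (c • f) g = c • dmul Δ f g := by
  unfold dmul; rw [TensorProduct.map_smul_left]; ext a; simp

theorem dmul_smul_right (Δ : A →ₗ[k] A ⊗[k] A) (c : k) (f g : (A →ₗ[k] k)) :
    dmul Δ f (c • g) = c • dmul Δ f g := by
  unfold dmul; rw [TensorProduct.map_smul_right]; ext a; simp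

theorem dmul_zero_left (Δ : A →ₗ[k] A ⊗[k] A) (g : (A →ₗ[k] k)) :
    dmul Δ (0 : (A →ₗ[k] k)) g = 0 := by
  ext a; simp [dmul]

theorem dmul_zero_right (Δ : A →ₗ[k] A ⊗[k] A) (f : (A →ₗ[k] k)) :
    dmul Δ f (0 : (A →ₗ[k] k)) = 0 := by
  ext a; simp [dmul]

/-- The operator of right multiplication `f' : g ↦ gf` on the dual algebra. -/
noncomputable def Rop (Δ : A →ₗ[k] A ⊗[k] A) (f : (A →ₗ[k] k)) :
    (A →ₗ[k] k) →ₗ[k] (A →ₗ[k] k) where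
  toFun g := dmul Δ g f
  map_add' g₁ g₂ := dmul_add_left Δ g₁ g₂ f
  map_smul' c g := dmul_smul_left Δ c g f

/-- The inner derivation `[f,g] = f'g' - g'f'` (in right-operator convention,
`x[f,g] = (xf)g - (xg)f`). -/
noncomputable def commD (Δ : A →ₗ[k] A ⊗[k] A) (f g : (A →ₗ[k] k)) :
    (A →ₗ[k] k) →ₗ[k] (A →ₗ[k] k) :=
  Rop Δ g ∘ₗ Rop Δ f - Rop Δ f ∘ₗ Rop Δ g

/-- The space of inner derivations of the dual algebra. -/
noncomputable def IntDer (Δ : A →ₗ[k] A ⊗[k] A) :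
    Submodule k ((A →ₗ[k] k) →ₗ[k] (A →ₗ[k] k)) :=
  Submodule.span k {d | ∃ f g : (A →ₗ[k] k), d = commD Δ f g}

/-- A weakly inner derivation of the dual algebra: a derivation that agrees with some
inner derivation on every finite-dimensional subcoalgebra. -/
def IsWIntDer (Δ : A →ₗ[k] A ⊗[k] A)
    (d : (A →ₗ[k] k) →ₗ[k] (A →ₗ[k] k)) : Prop :=
  IsDerivation Δ d ∧
  ∀ B : Submodule k A, IsSubcoalgebra Δ B → FiniteDimensional k B →
    ∃ i ∈ IntDer Δ, ∀ f : (A →ₗ[k] k), ∀ b ∈ B, d f b = i f b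

/-- The space of weakly inner derivations, as a submodule of `End(A*)`. -/
noncomputable def WIntDer (Δ : A →ₗ[k] A ⊗[k] A) :
    Submodule k ((A →ₗ[k] k) →ₗ[k] (A →ₗ[k] k)) where
  carrier := {d | IsWIntDer Δ d}
  zero_mem' := by
    refine ⟨fun f g => by simp [dmul_zero_left, dmul_zero_right],
      fun B hB hfin => ⟨0, Submodule.zero_mem _, fun f b hb => by simp⟩⟩
  add_mem' := by
    rintro d₁ d₂ ⟨hd₁, hw₁⟩ ⟨hd₂, hw₂⟩
    refine ⟨fun f g => ?_, fun B hB hfin => ?_⟩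
    · simp only [LinearMap.add_apply, hd₁ f g, hd₂ f g, dmul_add_left, dmul_add_right]
      abel
    · obtain ⟨i₁, hi₁, he₁⟩ := hw₁ B hB hfin
      obtain ⟨i₂, hi₂, he₂⟩ := hw₂ B hB hfin
      exact ⟨i₁ + i₂, Submodule.add_mem _ hi₁ hi₂, fun f b hb => by
        simp [LinearMap.add_apply, he₁ f b hb, he₂ f b hb]⟩
  smul_mem' := by
    rintro c d ⟨hd, hw⟩
    refine ⟨fun f g => ?_, fun B hB hfin => ?_⟩
    · simp only [LinearMap.smul_apply, hd f g, dmul_smul_left, dmul_smul_right, smul_add]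
    · obtain ⟨i, hi, he⟩ := hw B hB hfin
      exact ⟨c • i, Submodule.smul_mem _ c hi, fun f b hb => by
        simp [LinearMap.smul_apply, he f b hb]⟩
/-- Multiplication in the null extension `C = A* ⊕ A`. -/
noncomputable def cmul (Δ : A →ₗ[k] A ⊗[k] A) (x y : (A →ₗ[k] k) × A) :
    (A →ₗ[k] k) × A :=
  (dmul Δ x.1 y.1, lact Δ x.1 y.2 + lact Δ y.1 x.2)

theorem lact_add_left (Δ : A →ₗ[k] A ⊗[k] A) (f₁ f₂ : (A →ₗ[k] k)) (a : A) :
    lact Δ (f₁ + f₂) a = lact Δ f₁ a + lact Δ f₂ a := by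
  simp [lact, TensorProduct.map_add_right]

theorem lact_smul_left (Δ : A →ₗ[k] A ⊗[k] A) (c : k) (f : (A →ₗ[k] k)) (a : A) :
    lact Δ (c • f) a = c • lact Δ f a := by
  simp [lact, TensorProduct.map_smul_right]

/-- Right multiplication by an element of the null extension `C = A* ⊕ A`,
as a linear operator on `C`. -/
noncomputable def RopC (Δ : A →ₗ[k] A ⊗[k] A) (x : (A →ₗ[k] k) × A) :
    ((A →ₗ[k] k) × A) →ₗ[k] ((A →ₗ[k] k) × A) where
  toFun y := cmul Δ y x
  map_add' y z := by
    simp only [cmul, Prod.fst_add, Prod.snd_add, Prod.mk_add_mk, dmul_add_left,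
      lact_add_left, map_add]
    rw [Prod.mk.injEq]
    constructor
    · rfl
    · abel
  map_smul' c y := by
    simp only [cmul, Prod.smul_fst, Prod.smul_snd, Prod.smul_mk, dmul_smul_left,
      lact_smul_left, map_smul, RingHom.id_apply, smul_add]

/-- The operator `[x,y] = x'y' - y'x'` on the null extension `C`
(right-operator convention: `z[x,y] = (zx)y - (zy)x`). -/
noncomputable def commC (Δ : A →ₗ[k] A ⊗[k] A) (x y : (A →ₗ[k] k) × A) :
    ((A →ₗ[k] k) × A) →ₗ[k] ((A →ₗ[k] k) × A) :=
  RopC Δ y ∘ₗ RopC Δ x - RopC Δ x ∘ₗ RopC Δ y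

/-- The mixed commutator operator `[f,a]` on `C`, for `f ∈ A*` and `a ∈ A`. -/
noncomputable def commMixed (Δ : A →ₗ[k] A ⊗[k] A) (f : (A →ₗ[k] k)) (a : A) :
    ((A →ₗ[k] k) × A) →ₗ[k] ((A →ₗ[k] k) × A) :=
  commC Δ (f, 0) (0, a)

/-- The space `[A*, A]`, spanned by the mixed commutators, inside `End(C)`. -/
noncomputable def CommAA (Δ : A →ₗ[k] A ⊗[k] A) :
    Submodule k (((A →ₗ[k] k) × A) →ₗ[k] ((A →ₗ[k] k) × A)) :=
  Submodule.span k {u | ∃ (f : (A →ₗ[k] k)) (a : A), u = commMixed Δ f a}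

/-- The Kantor–Koecher–Tits bracket on `L(A*) = A* ⊕ (A*)' ⊕ WIntDer(A*) ⊕ Ā*`
(the third component is taken in `End(A*)`; for elements of `L(A*)` it lies in
`WIntDer(A*)`).  An element `(a, g, d, b)` represents `a + g' + d + b̄`. -/
noncomputable def bracketStar (Δ : A →ₗ[k] A ⊗[k] A)
    (l₁ l₂ : (A →ₗ[k] k) × (A →ₗ[k] k) × ((A →ₗ[k] k) →ₗ[k] (A →ₗ[k] k)) × (A →ₗ[k] k)) :
    (A →ₗ[k] k) × (A →ₗ[k] k) × ((A →ₗ[k] k) →ₗ[k] (A →ₗ[k] k)) × (A →ₗ[k] k) :=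
  (dmul Δ l₁.1 l₂.2.1 + l₂.2.2.1 l₁.1 - dmul Δ l₂.1 l₁.2.1 - l₁.2.2.1 l₂.1,
   dmul Δ l₁.1 l₂.2.2.2 - dmul Δ l₂.1 l₁.2.2.2 + l₂.2.2.1 l₁.2.1 - l₁.2.2.1 l₂.2.1,
   - commD Δ l₁.1 l₂.2.2.2 + commD Δ l₂.1 l₁.2.2.2 + commD Δ l₁.2.1 l₂.2.1
     + (l₂.2.2.1 ∘ₗ l₁.2.2.1 - l₁.2.2.1 ∘ₗ l₂.2.2.1),
   - dmul Δ l₁.2.2.2 l₂.2.1 + l₂.2.2.1 l₁.2.2.2 + dmul Δ l₂.2.2.2 l₁.2.1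
     - l₁.2.2.1 l₂.2.2.2)

/-- The involution `ε(a + c' + d + b̄) = b - c' + d + ā` on `L(A*)`. -/
def epsStar
    (l : (A →ₗ[k] k) × (A →ₗ[k] k) × ((A →ₗ[k] k) →ₗ[k] (A →ₗ[k] k)) × (A →ₗ[k] k)) :
    (A →ₗ[k] k) × (A →ₗ[k] k) × ((A →ₗ[k] k) →ₗ[k] (A →ₗ[k] k)) × (A →ₗ[k] k) :=
  (l.2.2.2, - l.2.1, l.2.2.1, l.1)

/-- The module action `[l, l*]` of `L(A*)` on `L(A) = A ⊕ A' ⊕ [A*,A] ⊕ Ā`.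
`Dex d` is the canonical extension of a weakly inner derivation `d` to `A`
(Proposition 2), passed as a parameter.  An element `(a, b, v, c)` of `L(A)`
represents `a + b' + v + c̄`. -/
noncomputable def actLL (Δ : A →ₗ[k] A ⊗[k] A)
    (Dex : ((A →ₗ[k] k) →ₗ[k] (A →ₗ[k] k)) → (A →ₗ[k] A))
    (l : A × A × (((A →ₗ[k] k) × A) →ₗ[k] ((A →ₗ[k] k) × A)) × A)
    (ls : (A →ₗ[k] k) × (A →ₗ[k] k) × ((A →ₗ[k] k) →ₗ[k] (A →ₗ[k] k)) × (A →ₗ[k] k)) :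
    A × A × (((A →ₗ[k] k) × A) →ₗ[k] ((A →ₗ[k] k) × A)) × A :=
  (lact Δ ls.2.1 l.1 + Dex ls.2.2.1 l.1 - lact Δ ls.1 l.2.1 - (l.2.2.1 (ls.1, 0)).2,
   ract Δ ls.2.2.2 l.1 - lact Δ ls.1 l.2.2.2 + Dex ls.2.2.1 l.2.1,
   commMixed Δ ls.2.2.2 l.1 + commMixed Δ ls.1 l.2.2.2 - commMixed Δ ls.2.1 l.2.1
     + (RopC Δ (ls.2.1, 0) ∘ₗ l.2.2.1 - l.2.2.1 ∘ₗ RopC Δ (ls.2.1, 0))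
     + ((LinearMap.prodMap ls.2.2.1 (Dex ls.2.2.1)) ∘ₗ l.2.2.1
        - l.2.2.1 ∘ₗ (LinearMap.prodMap ls.2.2.1 (Dex ls.2.2.1))),
   - lact Δ ls.2.1 l.2.2.2 + Dex ls.2.2.1 l.2.2.2 + lact Δ ls.2.2.2 l.2.1
     - (l.2.2.1 (ls.2.2.2, 0)).2)

/-- The natural pairing between `L(A*)` and `L(A)`, via the identification
`WIntDer(A*) ≅ ([A*,A])*` given by `φ` (Lemma 2). -/
noncomputable def pairSF (Δ : A →ₗ[k] A ⊗[k] A)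
    (φ : ↥(WIntDer Δ) →ₗ[k] (↥(CommAA Δ) →ₗ[k] k))
    (ls : (A →ₗ[k] k) × (A →ₗ[k] k) × ((A →ₗ[k] k) →ₗ[k] (A →ₗ[k] k)) × (A →ₗ[k] k))
    (l : A × A × (((A →ₗ[k] k) × A) →ₗ[k] ((A →ₗ[k] k) × A)) × A)
    (hd : ls.2.2.1 ∈ WIntDer Δ) (hv : l.2.2.1 ∈ CommAA Δ) : k :=
  ls.1 l.1 + ls.2.1 l.2.1 + φ ⟨ls.2.2.1, hd⟩ ⟨l.2.2.1, hv⟩ + ls.2.2.2 l.2.2.2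

/-- The space `L(A) = A ⊕ A' ⊕ [A*,A] ⊕ Ā` underlying the Lie coalgebra of Theorem 1.
An element `(a, b, v, c)` represents `a + b' + v + c̄`. -/
@[reducible] def LKKT (Δ : A →ₗ[k] A ⊗[k] A) : Type _ :=
  A × A × ↥(CommAA Δ) × A

/-- An element of `L(A*) = A* ⊕ (A*)' ⊕ WIntDer(A*) ⊕ Ā*` as a linear functional on
`L(A)`, via the identification `WIntDer(A*) ≅ ([A*,A])*` given by `φ` (Lemma 2). -/
noncomputable def toFunc (Δ : A →ₗ[k] A ⊗[k] A)
    (φ : ↥(WIntDer Δ) →ₗ[k] (↥(CommAA Δ) →ₗ[k] k))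
    (f : (A →ₗ[k] k) × (A →ₗ[k] k) × ((A →ₗ[k] k) →ₗ[k] (A →ₗ[k] k)) × (A →ₗ[k] k))
    (hf : f.2.2.1 ∈ WIntDer Δ) : LKKT Δ →ₗ[k] k :=
  f.1 ∘ₗ LinearMap.fst k A (A × (↥(CommAA Δ) × A)) +
  f.2.1 ∘ₗ (LinearMap.fst k A (↥(CommAA Δ) × A)
      ∘ₗ LinearMap.snd k A (A × (↥(CommAA Δ) × A))) +
  (φ ⟨f.2.2.1, hf⟩) ∘ₗ (LinearMap.fst k ↥(CommAA Δ) A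
      ∘ₗ LinearMap.snd k A (↥(CommAA Δ) × A)
      ∘ₗ LinearMap.snd k A (A × (↥(CommAA Δ) × A))) +
  f.2.2.2 ∘ₗ (LinearMap.snd k ↥(CommAA Δ) A
      ∘ₗ LinearMap.snd k A (↥(CommAA Δ) × A)
      ∘ₗ LinearMap.snd k A (A × (↥(CommAA Δ) × A)))

/-- The standard embedding `ρ` on a pair of functionals: `ρ(F ⊗ G)` as a functional
on `M ⊗ M`. -/
noncomputable def pairT {M : Type*} [AddCommGroup M] [Module k M]
    (F G : M →ₗ[k] k) : (M ⊗[k] M) →ₗ[k] k :=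
  (TensorProduct.lid k k).toLinearMap ∘ₗ TensorProduct.map F G

/-- The map `π(a + b' + v + c̄) = c - b' + v + ā` on `L(A)`. -/
def piL (Δ : A →ₗ[k] A ⊗[k] A) (l : LKKT Δ) : LKKT Δ :=
  (l.2.2.2, - l.2.1, l.2.2.1, l.1)

/-- The natural inclusion `A → L(A)`. -/
noncomputable def inclA (Δ : A →ₗ[k] A ⊗[k] A) : A →ₗ[k] LKKT Δ :=
  LinearMap.prod LinearMap.id (LinearMap.prod 0 (LinearMap.prod 0 0))

/-- The subspace `p*(B) = {v ∈ [A*,A] | A* · v ⊆ B}` of `[A*,A]`. -/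
noncomputable def pstarSub (Δ : A →ₗ[k] A ⊗[k] A) (B : Submodule k A) :
    Submodule k ↥(CommAA Δ) where
  carrier := {w | ∀ f : A →ₗ[k] k,
    (((w : ((A →ₗ[k] k) × A) →ₗ[k] ((A →ₗ[k] k) × A))) (f, 0)).2 ∈ B}
  zero_mem' := by intro f; simp
  add_mem' := by
    intro w₁ w₂ h₁ h₂ f
    simp only [Submodule.coe_add, LinearMap.add_apply, Prod.snd_add]
    exact B.add_mem (h₁ f) (h₂ f)
  smul_mem' := by
    intro c w h f
    simp only [SetLike.val_smul, LinearMap.smul_apply, Prod.smul_snd]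
    exact B.smul_mem c (h f)

/-- The subcoalgebra `I₁*(B) = B ⊕ B' ⊕ [A*, B] ⊕ B̄` of `⟨L(A), Δ_L⟩`. -/
noncomputable def I1star (Δ : A →ₗ[k] A ⊗[k] A) (B : Submodule k A) :
    Submodule k (LKKT Δ) :=
  B.prod (B.prod ((Submodule.comap (CommAA Δ).subtype
    (Submodule.span k {u | ∃ (f : A →ₗ[k] k), ∃ b ∈ B, u = commMixed Δ f b})).prod B))

/-- The subcoalgebra `I₂*(B) = B ⊕ B' ⊕ p*(B) ⊕ B̄` of `⟨L(A), Δ_L⟩`. -/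
noncomputable def I2star (Δ : A →ₗ[k] A ⊗[k] A) (B : Submodule k A) :
    Submodule k (LKKT Δ) :=
  B.prod (B.prod ((pstarSub Δ B).prod B))

noncomputable instance CommAA.instAddCommGroup (Δ : A →ₗ[k] A ⊗[k] A) :
    AddCommGroup ↥(CommAA Δ) :=
  @Submodule.addCommGroup k (((A →ₗ[k] k) × A) →ₗ[k] ((A →ₗ[k] k) × A)) _ _ _ (CommAA Δ)


/-!
The annihilator `I^⊥ ⊆ L(A*)` of a subcoalgebra `I` is an ideal of the Kantor–Koecher–Tits
algebra. Bracketing with `1`, `1'` and `1̄` (here the unit of `A*` is used) and halving shows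
that such an ideal is graded and governed by the ideal `J = I^⊥ ∩ A*` of `A*`: it contains `J'`
and `J̄`, and its derivation part contains `[A*, J]` and maps `A*` into `J`. As `φ` is onto, `I`
is the annihilator of `I^⊥`, so `B = A ∩ I` is the annihilator `J^⊥` of `J` in `A`. This is
stable under both actions of `A*`, hence a subcoalgebra, and pairing the four components of
`I^⊥` against `I` gives `I₁*(B) ⊆ I ⊆ I₂*(B)`.
-/
theorem dmul_sub_left (Δ : A →ₗ[k] A ⊗[k] A) (f₁ f₂ g : A →ₗ[k] k) :
    dmul Δ (f₁ - f₂) g = dmul Δ f₁ g - dmul Δ f₂ g := by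
  rw [eq_sub_iff_add_eq, ← dmul_add_left, sub_add_cancel]

theorem dmul_sub_right (Δ : A →ₗ[k] A ⊗[k] A) (f g₁ g₂ : A →ₗ[k] k) :
    dmul Δ f (g₁ - g₂) = dmul Δ f g₁ - dmul Δ f g₂ := by
  rw [eq_sub_iff_add_eq, ← dmul_add_right, sub_add_cancel]

namespace IsJordanCoalgebra

variable {Δ : A →ₗ[k] A ⊗[k] A}

local infixl:70 " ⋆ " => dmul Δ

theorem linearize (h2 : (2 : k) ≠ 0) (hJ : IsJordanCoalgebra Δ) (f h g : A →ₗ[k] k) :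
    f ⋆ f ⋆ g ⋆ h + f ⋆ h ⋆ g ⋆ f + h ⋆ f ⋆ g ⋆ f
      = f ⋆ f ⋆ (g ⋆ h) + f ⋆ h ⋆ (g ⋆ f) + h ⋆ f ⋆ (g ⋆ f) := by
  have e₁ := hJ.2 (f + h) g
  have e₂ := hJ.2 (f - h) g
  have e₃ := hJ.2 h g
  simp only [dmul_add_left, dmul_add_right, dmul_sub_left, dmul_sub_right] at e₁ e₂
  apply smul_right_injective (A →ₗ[k] k) h2
  linear_combination (norm := module) e₁ - e₂ - (2 : k) • e₃

theorem linearize₂ (h2 : (2 : k) ≠ 0) (hJ : IsJordanCoalgebra Δ) (u w h g : A →ₗ[k] k) :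
    u ⋆ w ⋆ g ⋆ h + w ⋆ u ⋆ g ⋆ h + u ⋆ h ⋆ g ⋆ w + h ⋆ u ⋆ g ⋆ w
      + w ⋆ h ⋆ g ⋆ u + h ⋆ w ⋆ g ⋆ u
    = u ⋆ w ⋆ (g ⋆ h) + w ⋆ u ⋆ (g ⋆ h) + u ⋆ h ⋆ (g ⋆ w) + h ⋆ u ⋆ (g ⋆ w)
      + w ⋆ h ⋆ (g ⋆ u) + h ⋆ w ⋆ (g ⋆ u) := by
  have e := hJ.linearize h2 (u + w) h g
  simp only [dmul_add_left, dmul_add_right] at e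
  linear_combination (norm := module) e - hJ.linearize h2 u h g - hJ.linearize h2 w h g

theorem isDerivation_commD (h2 : (2 : k) ≠ 0) (hJ : IsJordanCoalgebra Δ) (p q : A →ₗ[k] k) :
    IsDerivation Δ (commD Δ p q) := by
  intro f g
  have e₁ := hJ.linearize₂ h2 f g q p
  have e₂ := hJ.linearize₂ h2 f g p q
  simp only [commD, LinearMap.sub_apply, LinearMap.comp_apply, Rop, LinearMap.coe_mk,
    AddHom.coe_mk, dmul_sub_left, dmul_sub_right]
  rw [hJ.1 g f, hJ.1 q f, hJ.1 q g, hJ.1 p f, hJ.1 p g] at e₁ e₂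
  rw [hJ.1 q p] at e₂
  rw [hJ.1 (g ⋆ q) (f ⋆ p)] at e₁
  rw [hJ.1 (g ⋆ p) (f ⋆ q)] at e₂
  rw [hJ.1 f (g ⋆ p ⋆ q), hJ.1 f (g ⋆ q ⋆ p)]
  apply smul_right_injective (A →ₗ[k] k) h2
  linear_combination (norm := module) e₁ - e₂

theorem commD_mem_wIntDer (h2 : (2 : k) ≠ 0) (hJ : IsJordanCoalgebra Δ) (p q : A →ₗ[k] k) :
    commD Δ p q ∈ WIntDer Δ :=
  ⟨hJ.isDerivation_commD h2 p q,
    fun _ _ _ => ⟨commD Δ p q, Submodule.subset_span ⟨p, q, rfl⟩, fun _ _ _ => rfl⟩⟩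

end IsJordanCoalgebra

/-- Without this shortcut, the additive group that instance search finds on `End(A*)` does not
match the one in `commD` up to reducible unfolding, and `simp` cannot use `sub_self` there. -/
noncomputable instance instAddCommGroupEndDual :
    AddCommGroup ((A →ₗ[k] k) →ₗ[k] (A →ₗ[k] k)) :=
  LinearMap.addCommGroup

attribute [simp] dmul_zero_left dmul_zero_right

section Unit

variable {Δ : A →ₗ[k] A ⊗[k] A} {one : A →ₗ[k] k}

theorem Rop_zero : Rop Δ 0 = 0 :=
  LinearMap.ext (dmul_zero_right Δ)

theorem Rop_eq_id_of_dmul_one (hone : ∀ f, dmul Δ f one = f) : Rop Δ one = LinearMap.id :=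
  LinearMap.ext hone

@[simp] theorem commD_zero_left (h : A →ₗ[k] k) : commD Δ 0 h = 0 := by
  simp [commD, Rop_zero]

@[simp] theorem commD_zero_right (h : A →ₗ[k] k) : commD Δ h 0 = 0 := by
  simp [commD, Rop_zero]

theorem neg_commD (f g : A →ₗ[k] k) : -commD Δ f g = commD Δ g f :=
  neg_sub _ _

theorem commD_one_left (hone : ∀ f, dmul Δ f one = f) (h : A →ₗ[k] k) : commD Δ one h = 0 := by
  simp [commD, Rop_eq_id_of_dmul_one hone]

theorem commD_one_right (hone : ∀ f, dmul Δ f one = f) (h : A →ₗ[k] k) : commD Δ h one = 0 := by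
  simp [commD, Rop_eq_id_of_dmul_one hone]

theorem IsDerivation.apply_one (hone : ∀ f, dmul Δ one f = f ∧ dmul Δ f one = f)
    {d : (A →ₗ[k] k) →ₗ[k] (A →ₗ[k] k)} (hd : IsDerivation Δ d) : d one = 0 := by
  have h := hd one one
  rw [(hone one).1, (hone (d one)).2, (hone (d one)).1] at h
  simpa using h

end Unit

theorem apply_lact (Δ : A →ₗ[k] A ⊗[k] A) (q u : A →ₗ[k] k) (a : A) :
    q (lact Δ u a) = dmul Δ q u a := by
  have key : q ∘ₗ (TensorProduct.rid k A).toLinearMap ∘ₗ TensorProduct.map LinearMap.id u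
      = (TensorProduct.lid k k).toLinearMap ∘ₗ TensorProduct.map q u :=
    TensorProduct.ext' fun x y => by simp [mul_comm]
  exact congrArg (· (Δ a)) key

theorem apply_ract (Δ : A →ₗ[k] A ⊗[k] A) (q u : A →ₗ[k] k) (a : A) :
    q (ract Δ u a) = dmul Δ u q a := by
  have key : q ∘ₗ (TensorProduct.lid k A).toLinearMap ∘ₗ TensorProduct.map u LinearMap.id
      = (TensorProduct.lid k k).toLinearMap ∘ₗ TensorProduct.map u q :=
    TensorProduct.ext' fun x y => by simp
  exact congrArg (· (Δ a)) key

section Tensor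

variable {M : Type*} [AddCommGroup M] [Module k M]

theorem pairT_map {N : Type*} [AddCommGroup N] [Module k N] (F G : M →ₗ[k] k)
    (s r : N →ₗ[k] M) (t : N ⊗[k] N) :
    pairT F G (TensorProduct.map s r t) = pairT (F ∘ₗ s) (G ∘ₗ r) t := by
  have : pairT F G ∘ₗ TensorProduct.map s r = pairT (F ∘ₗ s) (G ∘ₗ r) :=
    TensorProduct.ext' fun x y => by simp [pairT]
  exact congrArg (· t) this

theorem eq_zero_of_forall_pairT {t : M ⊗[k] M} (h : ∀ F G : M →ₗ[k] k, pairT F G t = 0) :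
    t = 0 := by
  let b := Module.Basis.ofVectorSpace k M
  let bT := b.tensorProduct b
  apply bT.repr.injective
  ext ⟨i, j⟩
  have key : Finsupp.lapply (i, j) ∘ₗ (bT.repr : M ⊗[k] M →ₗ[k] _)
      = pairT (b.coord i) (b.coord j) :=
    TensorProduct.ext' fun x y => by
      simp [bT, Module.Basis.tensorProduct_repr_tmul_apply, pairT, mul_comm]
  simpa [h] using congrArg (· t) key

theorem mem_range_map_subtype_of_forall_pairT {B : Submodule k M} {t : M ⊗[k] M}
    (h : ∀ q ∈ B.dualAnnihilator, ∀ g, pairT q g t = 0 ∧ pairT g q t = 0) :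
    t ∈ LinearMap.range (TensorProduct.map B.subtype B.subtype) := by
  obtain ⟨C, hC⟩ := B.exists_isCompl
  set π := B.projectionOnto C hC
  set P := B.subtype ∘ₗ π
  have hker : ∀ F : M →ₗ[k] k, F ∘ₗ (LinearMap.id - P) ∈ B.dualAnnihilator := fun F =>
    (B.mem_dualAnnihilator _).2 fun x hx => by
      simp [P, π, Submodule.projectionOnto_apply_of_mem_left hC hx]
  have hr : (LinearMap.id - P).rTensor M t = 0 := eq_zero_of_forall_pairT fun F G => by
    rw [LinearMap.rTensor, pairT_map]
    exact (h _ (hker F) _).1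
  have hl : (LinearMap.id - P).lTensor M t = 0 := eq_zero_of_forall_pairT fun F G => by
    rw [LinearMap.lTensor, pairT_map]
    exact (h _ (hker G) _).2
  rw [LinearMap.rTensor_sub, LinearMap.sub_apply, LinearMap.rTensor_id, LinearMap.id_apply,
    sub_eq_zero] at hr
  rw [LinearMap.lTensor_sub, LinearMap.sub_apply, LinearMap.lTensor_id, LinearMap.id_apply,
    sub_eq_zero] at hl
  have ht : t = TensorProduct.map P P t := by
    rw [← LinearMap.rTensor_comp_lTensor, LinearMap.comp_apply, ← hl, ← hr]
  rw [ht, TensorProduct.map_comp]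
  exact LinearMap.mem_range_self _ _

end Tensor

theorem isSubcoalgebra_of_lact_mem_of_ract_mem {Δ : A →ₗ[k] A ⊗[k] A} {B : Submodule k A}
    (hl : ∀ f, ∀ b ∈ B, lact Δ f b ∈ B) (hr : ∀ f, ∀ b ∈ B, ract Δ f b ∈ B) :
    IsSubcoalgebra Δ B := fun b hb =>
  mem_range_map_subtype_of_forall_pairT fun q hq g =>
    ⟨(apply_lact Δ q g b).symm.trans ((B.mem_dualAnnihilator q).1 hq _ (hl g b hb)),
      (apply_ract Δ q g b).symm.trans ((B.mem_dualAnnihilator q).1 hq _ (hr g b hb))⟩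

/-- `L(A*)` with its derivation component taken in `WIntDer(A*)`, where the pairing with `L(A)` is
defined. -/
abbrev LStar (Δ : A →ₗ[k] A ⊗[k] A) : Type _ :=
  (A →ₗ[k] k) × (A →ₗ[k] k) × WIntDer Δ × (A →ₗ[k] k)

namespace LStar

variable {Δ : A →ₗ[k] A ⊗[k] A}

def val (ξ : LStar Δ) :
    (A →ₗ[k] k) × (A →ₗ[k] k) × ((A →ₗ[k] k) →ₗ[k] (A →ₗ[k] k)) × (A →ₗ[k] k) :=
  (ξ.1, ξ.2.1, ξ.2.2.1, ξ.2.2.2)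

theorem toFunc_val_apply (φ : WIntDer Δ →ₗ[k] (CommAA Δ →ₗ[k] k)) (ξ : LStar Δ) (l : LKKT Δ) :
    toFunc Δ φ (val ξ) ξ.2.2.1.2 l
      = ξ.1 l.1 + ξ.2.1 l.2.1 + φ ξ.2.2.1 l.2.2.1 + ξ.2.2.2 l.2.2.2 := by
  simp [toFunc, val]

noncomputable def pairing (φ : WIntDer Δ →ₗ[k] (CommAA Δ →ₗ[k] k)) :
    LStar Δ →ₗ[k] Module.Dual k (LKKT Δ) where
  toFun ξ := toFunc Δ φ (val ξ) ξ.2.2.1.2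
  map_add' ξ η := LinearMap.ext fun l => by
    simp only [LinearMap.add_apply, toFunc_val_apply, Prod.fst_add, Prod.snd_add, map_add]
    ring
  map_smul' c ξ := LinearMap.ext fun l => by
    simp only [LinearMap.smul_apply, toFunc_val_apply, Prod.smul_fst, Prod.smul_snd, map_smul,
      RingHom.id_apply, smul_eq_mul]
    ring

variable {φ : WIntDer Δ →ₗ[k] (CommAA Δ →ₗ[k] k)}

theorem pairing_apply (ξ : LStar Δ) (l : LKKT Δ) :
    pairing φ ξ l = ξ.1 l.1 + ξ.2.1 l.2.1 + φ ξ.2.2.1 l.2.2.1 + ξ.2.2.2 l.2.2.2 :=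
  toFunc_val_apply φ ξ l

theorem pairing_surjective (hφ : Function.Surjective φ) : Function.Surjective (pairing φ) := by
  intro ζ
  obtain ⟨d, hd⟩ := hφ (ζ ∘ₗ LinearMap.inr k A _ ∘ₗ LinearMap.inr k A _ ∘ₗ LinearMap.inl k _ A)
  refine ⟨(ζ ∘ₗ LinearMap.inl k A _, ζ ∘ₗ LinearMap.inr k A _ ∘ₗ LinearMap.inl k A _, d,
    ζ ∘ₗ LinearMap.inr k A _ ∘ₗ LinearMap.inr k A _ ∘ₗ LinearMap.inr k _ A), ?_⟩
  refine LinearMap.ext fun l => ?_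
  rw [pairing_apply, hd]
  simp only [LinearMap.comp_apply, LinearMap.inl_apply, LinearMap.inr_apply, ← map_add]
  simp

end LStar

open LStar

section Ideal

variable {Δ : A →ₗ[k] A ⊗[k] A} {φ : WIntDer Δ →ₗ[k] (CommAA Δ →ₗ[k] k)}

noncomputable def annihilator (φ : WIntDer Δ →ₗ[k] (CommAA Δ →ₗ[k] k)) (I : Submodule k (LKKT Δ)) :
    Submodule k (LStar Δ) :=
  I.dualAnnihilator.comap (pairing φ)

theorem mem_annihilator {I : Submodule k (LKKT Δ)} {ξ : LStar Δ} :
    ξ ∈ annihilator φ I ↔ ∀ l ∈ I, pairing φ ξ l = 0 :=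
  Submodule.mem_dualAnnihilator _

theorem mem_of_forall_mem_annihilator (hφ : Function.Surjective φ) {I : Submodule k (LKKT Δ)}
    {x : LKKT Δ} (hx : ∀ ξ ∈ annihilator φ I, pairing φ ξ x = 0) : x ∈ I := by
  refine (Subspace.forall_mem_dualAnnihilator_apply_eq_zero_iff I x).1 fun ζ hζ => ?_
  obtain ⟨ξ, rfl⟩ := pairing_surjective hφ ζ
  exact hx ξ hζ

/-- An ideal of `L(A*)`, phrased as closure under bracketing with arbitrary elements. -/
def IsBracketClosed (N : Submodule k (LStar Δ)) : Prop :=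
  ∀ ξ ∈ N, ∀ g η : LStar Δ, bracketStar Δ (val ξ) (val g) = val η → η ∈ N

/-- `⟨[ξ, g], l⟩ = ⟨ξ ⊗ g, Δ_L l⟩`, and `Δ_L l ∈ I ⊗ I` is killed by `ξ ⊗ g` when `ξ ⊥ I`. -/
theorem isBracketClosed_annihilator {ΔL : LKKT Δ →ₗ[k] (LKKT Δ ⊗[k] LKKT Δ)}
    (hΔL : ∀ (f g : (A →ₗ[k] k) × (A →ₗ[k] k) ×
          ((A →ₗ[k] k) →ₗ[k] (A →ₗ[k] k)) × (A →ₗ[k] k))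
      (hf : f.2.2.1 ∈ WIntDer Δ) (hg : g.2.2.1 ∈ WIntDer Δ)
      (hbr : (bracketStar Δ f g).2.2.1 ∈ WIntDer Δ) (l : LKKT Δ),
      toFunc Δ φ (bracketStar Δ f g) hbr l
        = pairT (M := LKKT Δ) (toFunc Δ φ f hf) (toFunc Δ φ g hg) (ΔL l))
    {I : Submodule k (LKKT Δ)} (hI : IsSubcoalgebra (A := LKKT Δ) ΔL I) :
    IsBracketClosed (annihilator φ I) := by
  intro ξ hξ g η hη
  refine mem_annihilator.2 fun l hl => ?_
  obtain ⟨s, hs⟩ := hI l hl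
  have hξI : pairing φ ξ ∘ₗ I.subtype = 0 := LinearMap.ext fun y => mem_annihilator.1 hξ y y.2
  have hbr : (bracketStar Δ (val ξ) (val g)).2.2.1 ∈ WIntDer Δ := hη ▸ η.2.2.1.2
  have hηξ : pairing φ η = toFunc Δ φ _ hbr := by
    generalize bracketStar Δ (val ξ) (val g) = b at hη hbr
    subst hη
    rfl
  rw [hηξ, hΔL _ _ ξ.2.2.1.2 g.2.2.1.2, ← hs, pairT_map]
  change pairT (pairing φ ξ ∘ₗ I.subtype) _ s = 0
  simp [hξI, pairT]

noncomputable def fstPart (N : Submodule k (LStar Δ)) : Submodule k (A →ₗ[k] k) :=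
  N.comap (LinearMap.inl k _ _)

theorem mem_fstPart {N : Submodule k (LStar Δ)} {q : A →ₗ[k] k} :
    q ∈ fstPart N ↔ ((q, 0, 0, 0) : LStar Δ) ∈ N :=
  Iff.rfl

namespace IsBracketClosed

variable {one : A →ₗ[k] k} {N : Submodule k (LStar Δ)}

theorem mem_of_bracket_one_snd (hone : ∀ f, dmul Δ one f = f ∧ dmul Δ f one = f)
    (hN : IsBracketClosed N) {f₁ f₂ f₄ : A →ₗ[k] k} {d : WIntDer Δ} (h : (f₁, f₂, d, f₄) ∈ N) :
    ((f₁, 0, 0, -f₄) : LStar Δ) ∈ N :=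
  hN _ h (0, one, 0, 0) _ <| by
    simp [bracketStar, val, (hone _).2, d.2.1.apply_one hone, commD_one_right (hone · |>.2)]

theorem mem_of_bracket_one_fst (hone : ∀ f, dmul Δ one f = f ∧ dmul Δ f one = f)
    (hN : IsBracketClosed N) {f₁ f₂ f₄ : A →ₗ[k] k} {d : WIntDer Δ} (h : (f₁, f₂, d, f₄) ∈ N) :
    ((-f₂, -f₄, 0, 0) : LStar Δ) ∈ N :=
  hN _ h (one, 0, 0, 0) _ <| by
    simp [bracketStar, val, (hone _).1, d.2.1.apply_one hone, commD_one_left (hone · |>.2)]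

theorem mem_of_bracket_one_bar (hone : ∀ f, dmul Δ one f = f ∧ dmul Δ f one = f)
    (hN : IsBracketClosed N) {f₁ f₂ f₄ : A →ₗ[k] k} {d : WIntDer Δ} (h : (f₁, f₂, d, f₄) ∈ N) :
    ((0, f₁, 0, f₂) : LStar Δ) ∈ N :=
  hN _ h (0, 0, 0, one) _ <| by
    simp [bracketStar, val, (hone _).1, (hone _).2, d.2.1.apply_one hone,
      commD_one_right (hone · |>.2)]

theorem snd_mem_of_mem_fstPart (hone : ∀ f, dmul Δ one f = f ∧ dmul Δ f one = f)
    (hN : IsBracketClosed N) {q : A →ₗ[k] k} (hq : q ∈ fstPart N) :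
    ((0, q, 0, 0) : LStar Δ) ∈ N :=
  hN.mem_of_bracket_one_bar hone hq

theorem bar_mem_of_mem_fstPart (hone : ∀ f, dmul Δ one f = f ∧ dmul Δ f one = f)
    (hN : IsBracketClosed N) {q : A →ₗ[k] k} (hq : q ∈ fstPart N) :
    ((0, 0, 0, q) : LStar Δ) ∈ N :=
  hN.mem_of_bracket_one_bar hone (hN.snd_mem_of_mem_fstPart hone hq)

theorem mem_fstPart_of_bar_mem (hone : ∀ f, dmul Δ one f = f ∧ dmul Δ f one = f)
    (hN : IsBracketClosed N) {q : A →ₗ[k] k} (hq : ((0, 0, 0, q) : LStar Δ) ∈ N) :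
    q ∈ fstPart N := by
  simpa [mem_fstPart] using hN.mem_of_bracket_one_fst hone (hN.mem_of_bracket_one_fst hone hq)

theorem components_mem (h2 : (2 : k) ≠ 0) (hone : ∀ f, dmul Δ one f = f ∧ dmul Δ f one = f)
    (hN : IsBracketClosed N) {ξ : LStar Δ} (hξ : ξ ∈ N) :
    ξ.1 ∈ fstPart N ∧ ξ.2.1 ∈ fstPart N ∧ ((0, 0, ξ.2.2.1, 0) : LStar Δ) ∈ N ∧
      ξ.2.2.2 ∈ fstPart N := by
  obtain ⟨f₁, f₂, d, f₄⟩ := ξ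
  have hneg := hN.mem_of_bracket_one_snd hone hξ
  have hpos : ((f₁, 0, 0, f₄) : LStar Δ) ∈ N := by
    simpa using hN.mem_of_bracket_one_snd hone hneg
  have h₁ : f₁ ∈ fstPart N := by
    rw [mem_fstPart, ← N.smul_mem_iff h2]
    convert N.add_mem hpos hneg using 1
    simp [two_smul]
  have h₄ : ((0, 0, 0, f₄) : LStar Δ) ∈ N := by
    rw [← N.smul_mem_iff h2]
    convert N.sub_mem hpos hneg using 1
    simp [two_smul]
  have hrest : ((0, f₂, d, 0) : LStar Δ) ∈ N := by
    convert N.sub_mem (N.sub_mem hξ h₁) h₄ using 1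
    simp
  have h₂ : f₂ ∈ fstPart N := by
    rw [mem_fstPart, ← N.neg_mem_iff]
    simpa using hN.mem_of_bracket_one_fst hone hrest
  refine ⟨h₁, h₂, ?_, hN.mem_fstPart_of_bar_mem hone h₄⟩
  convert N.sub_mem hrest (hN.snd_mem_of_mem_fstPart hone h₂) using 1
  simp

theorem dmul_mem_fstPart (hN : IsBracketClosed N) {q : A →ₗ[k] k} (hq : q ∈ fstPart N)
    (h : A →ₗ[k] k) : dmul Δ q h ∈ fstPart N :=
  hN _ hq (0, h, 0, 0) _ <| by simp [bracketStar, val]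

theorem apply_mem_fstPart (hN : IsBracketClosed N) {d : WIntDer Δ}
    (hd : ((0, 0, d, 0) : LStar Δ) ∈ N) (h : A →ₗ[k] k) :
    (d : (A →ₗ[k] k) →ₗ[k] (A →ₗ[k] k)) h ∈ fstPart N := by
  rw [← Submodule.neg_mem_iff]
  exact hN _ hd (h, 0, 0, 0) _ <| by simp [bracketStar, val]

theorem commD_mem (h2 : (2 : k) ≠ 0) (hJ : IsJordanCoalgebra Δ)
    (hone : ∀ f, dmul Δ one f = f ∧ dmul Δ f one = f) (hN : IsBracketClosed N)
    {q : A →ₗ[k] k} (hq : q ∈ fstPart N) (h : A →ₗ[k] k) :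
    ((0, 0, ⟨commD Δ h q, hJ.commD_mem_wIntDer h2 h q⟩, 0) : LStar Δ) ∈ N := by
  have h₁ : ((0, dmul Δ q h, ⟨commD Δ h q, hJ.commD_mem_wIntDer h2 h q⟩, 0) : LStar Δ) ∈ N :=
    hN _ hq (0, 0, 0, h) _ <| by simp [bracketStar, val, neg_commD]
  have h₂ : ((0, -dmul Δ h q, ⟨commD Δ h q, hJ.commD_mem_wIntDer h2 h q⟩, 0) : LStar Δ) ∈ N :=
    hN _ (hN.bar_mem_of_mem_fstPart hone hq) (h, 0, 0, 0) _ <| by simp [bracketStar, val]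
  rw [← N.smul_mem_iff h2]
  convert N.add_mem h₁ h₂ using 1
  simp [two_smul, hJ.1 q h]

theorem isSubcoalgebra_dualCoannihilator_fstPart (hJ : IsJordanCoalgebra Δ)
    (hN : IsBracketClosed N) : IsSubcoalgebra Δ (fstPart N).dualCoannihilator := by
  refine isSubcoalgebra_of_lact_mem_of_ract_mem (fun f b hb => ?_) (fun f b hb => ?_) <;>
    refine (Submodule.mem_dualCoannihilator _).2 fun q hq => ?_
  · rw [apply_lact]
    exact (Submodule.mem_dualCoannihilator _).1 hb _ (hN.dmul_mem_fstPart hq f)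
  · rw [apply_ract, hJ.1]
    exact (Submodule.mem_dualCoannihilator _).1 hb _ (hN.dmul_mem_fstPart hq f)

end IsBracketClosed

theorem commMixed_apply_snd (p h : A →ₗ[k] k) (a : A) :
    (commMixed Δ p a (h, 0)).2 = lact Δ (dmul Δ h p) a - lact Δ p (lact Δ h a) := by
  simp [commMixed, commC, RopC, cmul]

theorem phi_commD_apply (hJ : IsJordanCoalgebra Δ)
    (hφ : ∀ (e : ↥(WIntDer Δ)) (f : A →ₗ[k] k) (a : A) (h : commMixed Δ f a ∈ CommAA Δ),
      φ e ⟨commMixed Δ f a, h⟩ = (e : ((A →ₗ[k] k) →ₗ[k] (A →ₗ[k] k))) f a)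
    (h q : A →ₗ[k] k) (hm : commD Δ h q ∈ WIntDer Δ) (v : CommAA Δ) :
    φ ⟨commD Δ h q, hm⟩ v = q ((v : ((A →ₗ[k] k) × A) →ₗ[k] ((A →ₗ[k] k) × A)) (h, 0)).2 := by
  have key : φ ⟨commD Δ h q, hm⟩
      = q ∘ₗ LinearMap.snd k _ A ∘ₗ LinearMap.applyₗ (h, 0) ∘ₗ (CommAA Δ).subtype := by
    refine LinearMap.ext_on Submodule.span_span_coe_preimage ?_
    rintro ⟨_, hu⟩ ⟨p, a, rfl⟩
    simp only [LinearMap.comp_apply, hφ, Submodule.subtype_apply, LinearMap.applyₗ_apply_apply,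
      LinearMap.snd_apply, commMixed_apply_snd, map_sub, apply_lact]
    simp only [commD, LinearMap.sub_apply, LinearMap.comp_apply, Rop, LinearMap.coe_mk,
      AddHom.coe_mk]
    rw [hJ.1 q, hJ.1 h p, hJ.1 q p]
  exact congrArg (· v) key

theorem phi_eq_zero_of_mem_span
    (hφ : ∀ (e : ↥(WIntDer Δ)) (f : A →ₗ[k] k) (a : A) (h : commMixed Δ f a ∈ CommAA Δ),
      φ e ⟨commMixed Δ f a, h⟩ = (e : ((A →ₗ[k] k) →ₗ[k] (A →ₗ[k] k))) f a)
    {B : Submodule k A} {d : WIntDer Δ}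
    (hd : ∀ p, ∀ b ∈ B, (d : (A →ₗ[k] k) →ₗ[k] (A →ₗ[k] k)) p b = 0) {v : CommAA Δ}
    (hv : (v : ((A →ₗ[k] k) × A) →ₗ[k] ((A →ₗ[k] k) × A)) ∈
      Submodule.span k {u | ∃ f : A →ₗ[k] k, ∃ b ∈ B, u = commMixed Δ f b}) :
    φ d v = 0 := by
  have hle : Submodule.span k {u | ∃ f : A →ₗ[k] k, ∃ b ∈ B, u = commMixed Δ f b}
      ≤ (LinearMap.ker (φ d)).map (CommAA Δ).subtype := by
    rw [Submodule.span_le]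
    rintro _ ⟨f, b, hb, rfl⟩
    exact ⟨⟨commMixed Δ f b, Submodule.subset_span ⟨f, b, rfl⟩⟩,
      LinearMap.mem_ker.2 ((hφ d f b _).trans (hd f b hb)), rfl⟩
  obtain ⟨w, hw, hwv⟩ := hle hv
  rwa [← Subtype.ext hwv]

variable {I : Submodule k (LKKT Δ)} {one : A →ₗ[k] k}

theorem comap_inclA_eq (h2 : (2 : k) ≠ 0) (hone : ∀ f, dmul Δ one f = f ∧ dmul Δ f one = f)
    (hφ : Function.Surjective φ) (hN : IsBracketClosed (annihilator φ I)) :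
    I.comap (inclA Δ) = (fstPart (annihilator φ I)).dualCoannihilator := by
  ext a
  rw [Submodule.mem_comap, Submodule.mem_dualCoannihilator]
  constructor
  · intro ha q hq
    simpa [pairing_apply, inclA] using mem_annihilator.1 hq _ ha
  · intro ha
    refine mem_of_forall_mem_annihilator hφ fun ξ hξ => ?_
    simpa [pairing_apply, inclA] using ha _ (hN.components_mem h2 hone hξ).1

theorem I1star_le (h2 : (2 : k) ≠ 0) (hone : ∀ f, dmul Δ one f = f ∧ dmul Δ f one = f)
    (hφ : ∀ (e : ↥(WIntDer Δ)) (f : A →ₗ[k] k) (a : A) (h : commMixed Δ f a ∈ CommAA Δ),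
      φ e ⟨commMixed Δ f a, h⟩ = (e : ((A →ₗ[k] k) →ₗ[k] (A →ₗ[k] k))) f a)
    (hφsurj : Function.Surjective φ) (hN : IsBracketClosed (annihilator φ I)) :
    I1star Δ (fstPart (annihilator φ I)).dualCoannihilator ≤ I := by
  rintro x ⟨hx₁, hx₂, hx₃, hx₄⟩
  simp only [SetLike.mem_coe, Submodule.mem_dualCoannihilator] at hx₁ hx₂ hx₄
  refine mem_of_forall_mem_annihilator hφsurj fun ξ hξ => ?_
  obtain ⟨h₁, h₂, hd, h₄⟩ := hN.components_mem h2 hone hξ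
  have hv : φ ξ.2.2.1 x.2.2.1 = 0 :=
    phi_eq_zero_of_mem_span hφ
      (fun p b hb => (Submodule.mem_dualCoannihilator _).1 hb _ (hN.apply_mem_fstPart hd p)) hx₃
  rw [pairing_apply, hx₁ _ h₁, hx₂ _ h₂, hv, hx₄ _ h₄]
  simp

theorem le_I2star (h2 : (2 : k) ≠ 0) (hJ : IsJordanCoalgebra Δ)
    (hone : ∀ f, dmul Δ one f = f ∧ dmul Δ f one = f)
    (hφ : ∀ (e : ↥(WIntDer Δ)) (f : A →ₗ[k] k) (a : A) (h : commMixed Δ f a ∈ CommAA Δ),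
      φ e ⟨commMixed Δ f a, h⟩ = (e : ((A →ₗ[k] k) →ₗ[k] (A →ₗ[k] k))) f a)
    (hN : IsBracketClosed (annihilator φ I)) :
    I ≤ I2star Δ (fstPart (annihilator φ I)).dualCoannihilator := by
  intro l hl
  have hpair : ∀ ξ ∈ annihilator φ I, pairing φ ξ l = 0 := fun ξ hξ => mem_annihilator.1 hξ l hl
  simp only [I2star, Submodule.mem_prod, Submodule.mem_dualCoannihilator]
  refine ⟨fun q hq => ?_, fun q hq => ?_, fun f => (Submodule.mem_dualCoannihilator _).2
    fun q hq => ?_, fun q hq => ?_⟩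
  · simpa [pairing_apply] using hpair _ hq
  · simpa [pairing_apply] using hpair _ (hN.snd_mem_of_mem_fstPart hone hq)
  · rw [← phi_commD_apply hJ hφ f q (hJ.commD_mem_wIntDer h2 f q)]
    simpa [pairing_apply] using hpair _ (hN.commD_mem h2 hJ hone hq f)
  · simpa [pairing_apply] using hpair _ (hN.bar_mem_of_mem_fstPart hone hq)

end Ideal

/-- **Theorem 3 (second half).** If `I` is a subcoalgebra of the Lie coalgebra
`⟨L(A), Δ_L⟩` of Theorem 1, then `B = A ∩ I` is a subcoalgebra of `⟨A, Δ⟩` and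
`I₁*(B) ⊆ I ⊆ I₂*(B)`. -/
theorem theorem3_converse {k : Type*} [Field k] {A : Type*} [AddCommGroup A] [Module k A]
    (h2 : (2 : k) ≠ 0) (Δ : A →ₗ[k] A ⊗[k] A) (hJ : IsJordanCoalgebra Δ)
    (one : A →ₗ[k] k) (hone : ∀ f, dmul Δ one f = f ∧ dmul Δ f one = f)
    (φ : ↥(WIntDer Δ) →ₗ[k] (↥(CommAA Δ) →ₗ[k] k))
    (hφ : ∀ (e : ↥(WIntDer Δ)) (f : A →ₗ[k] k) (a : A) (h : commMixed Δ f a ∈ CommAA Δ),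
      φ e ⟨commMixed Δ f a, h⟩ = (e : ((A →ₗ[k] k) →ₗ[k] (A →ₗ[k] k))) f a)
    (hφbij : Function.Bijective φ)
    (ΔL : LKKT Δ →ₗ[k] (LKKT Δ ⊗[k] LKKT Δ))
    (hΔL : ∀ (f g : (A →ₗ[k] k) × (A →ₗ[k] k) ×
          ((A →ₗ[k] k) →ₗ[k] (A →ₗ[k] k)) × (A →ₗ[k] k))
      (hf : f.2.2.1 ∈ WIntDer Δ) (hg : g.2.2.1 ∈ WIntDer Δ)
      (hbr : (bracketStar Δ f g).2.2.1 ∈ WIntDer Δ) (l : LKKT Δ),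
      toFunc Δ φ (bracketStar Δ f g) hbr l
        = pairT (M := LKKT Δ) (toFunc Δ φ f hf) (toFunc Δ φ g hg) (ΔL l))
    (I : Submodule k (LKKT Δ)) (hI : IsSubcoalgebra (A := LKKT Δ) ΔL I) :
    IsSubcoalgebra Δ (Submodule.comap (inclA Δ) I) ∧
    I1star Δ (Submodule.comap (inclA Δ) I) ≤ I ∧
    I ≤ I2star Δ (Submodule.comap (inclA Δ) I) := by
  have hN : IsBracketClosed (annihilator φ I) := isBracketClosed_annihilator hΔL hI
  rw [comap_inclA_eq h2 hone hφbij.2 hN]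
  exact ⟨hN.isSubcoalgebra_dualCoannihilator_fstPart hJ, I1star_le h2 hone hφ hφbij.2 hN,
    le_I2star h2 hJ hone hφ hN⟩
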